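/- arXiv:2206.02172 — 2 statements merged into one kernel-verified Lean document; each statement's English description precedes it below -/
import Mathlib

section
/- Let f₁, …, f_n and g₁, …, g_m be holomorphic on a connected open U ⊆ ℂ. If Σᵢ |fᵢ(s)|² = Σⱼ |gⱼ(s)|² for all s ∈ U, then the polarized identity Σᵢ fᵢ(s) · conj(fᵢ(t̄)) = Σⱼ gⱼ(s) · conj(gⱼ(t̄)) holds for all s ∈ U and t in the conjugate domain, whenever both sides extend holomorphically. -/
/-!
Collect the `fᵢ` and `gⱼ` into holomorphic maps `F`, `G` into Euclidean spaces: the hypothesis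
becomes `‖F s‖ = ‖G s‖` and the claim `⟪F w, F s⟫ = ⟪G w, G s⟫` with `w = t̄`.
Differentiating an identity `⟪H, F⟫ = ⟪K, G⟫` in the real and in the imaginary direction
separates its `∂`- and `∂̄`-parts, which gives `⟪F⁽ˡ⁾ s, F s⟫ = ⟪G⁽ˡ⁾ s, G s⟫` for every `l`.
So for fixed `s` the holomorphic functions `w ↦ ⟪F s, F w⟫` and `w ↦ ⟪G s, G w⟫` have the same
Taylor coefficients at `s`, and they agree on `U` by the identity theorem.
-/

open Complex ComplexConjugate Filter Topology
open scoped InnerProductSpace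

theorem AnalyticAt.eventuallyEq_of_iteratedDeriv_eq {𝕜 E : Type*} [NontriviallyNormedField 𝕜]
    [CharZero 𝕜] [NormedAddCommGroup E] [NormedSpace 𝕜 E] [CompleteSpace E] {f g : 𝕜 → E} {z : 𝕜}
    (hf : AnalyticAt 𝕜 f z) (hg : AnalyticAt 𝕜 g z)
    (h : ∀ l, iteratedDeriv l f z = iteratedDeriv l g z) : f =ᶠ[𝓝 z] g := by
  have hfg : analyticOrderAt (f - g) z = ⊤ := by
    refine ENat.eq_top_iff_forall_ge.2 fun l =>
      (natCast_le_analyticOrderAt_iff_iteratedDeriv_eq_zero (hf.sub hg)).2 fun i _ => ?_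
    rw [iteratedDeriv_sub hf.contDiffAt hg.contDiffAt, h, sub_self]
  filter_upwards [analyticOrderAt_eq_top.1 hfg] with w hw
  exact sub_eq_zero.1 hw

theorem ContinuousLinearMap.iteratedDeriv_comp_left {𝕜 E F : Type*} [NontriviallyNormedField 𝕜]
    [NormedAddCommGroup E] [NormedSpace 𝕜 E] [NormedAddCommGroup F] [NormedSpace 𝕜 F]
    (L : E →L[𝕜] F) {f : 𝕜 → E} {z : 𝕜} {l : ℕ} (hf : ContDiffAt 𝕜 l f z) :
    iteratedDeriv l (L ∘ f) z = L (iteratedDeriv l f z) := by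
  simp [iteratedDeriv_eq_iteratedFDeriv, L.iteratedFDeriv_comp_left hf le_rfl]

section

variable {E E' : Type*} [NormedAddCommGroup E] [InnerProductSpace ℂ E]
  [NormedAddCommGroup E'] [InnerProductSpace ℂ E']

theorem hasDerivAt_inner_along_line {F H : ℂ → E} {s : ℂ} (v : ℂ)
    (hF : DifferentiableAt ℂ F s) (hH : DifferentiableAt ℂ H s) :
    HasDerivAt (fun x : ℝ => ⟪H (s + x * v), F (s + x * v)⟫_ℂ)
      (v * ⟪H s, deriv F s⟫_ℂ + conj v * ⟪deriv H s, F s⟫_ℂ) 0 := by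
  have hline : HasDerivAt (fun x : ℝ => s + x * v) v 0 := by
    simpa using ((hasDerivAt_id (0 : ℝ)).ofReal_comp.mul_const v).const_add s
  have hF' : HasDerivAt (F ∘ fun x : ℝ => s + x * v) (v • deriv F s) 0 :=
    .scomp 0 (by rw [ofReal_zero, zero_mul, add_zero]; exact hF.hasDerivAt) hline
  have hH' : HasDerivAt (H ∘ fun x : ℝ => s + x * v) (v • deriv H s) 0 :=
    .scomp 0 (by rw [ofReal_zero, zero_mul, add_zero]; exact hH.hasDerivAt) hline
  simpa [Function.comp_def, inner_smul_left, inner_smul_right] using hH'.inner ℂ hF'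

variable {U : Set ℂ}

theorem inner_deriv_eq_of_inner_eq (hU : IsOpen U) {F H : ℂ → E} {G K : ℂ → E'}
    (hF : DifferentiableOn ℂ F U) (hH : DifferentiableOn ℂ H U)
    (hG : DifferentiableOn ℂ G U) (hK : DifferentiableOn ℂ K U)
    (h : ∀ z ∈ U, ⟪H z, F z⟫_ℂ = ⟪K z, G z⟫_ℂ) {s : ℂ} (hs : s ∈ U) :
    ⟪deriv H s, F s⟫_ℂ = ⟪deriv K s, G s⟫_ℂ := by
  have hdiff (v : ℂ) :
      v * ⟪H s, deriv F s⟫_ℂ + conj v * ⟪deriv H s, F s⟫_ℂ =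
        v * ⟪K s, deriv G s⟫_ℂ + conj v * ⟪deriv K s, G s⟫_ℂ := by
    have hnear : ∀ᶠ x : ℝ in 𝓝 0, s + x * v ∈ U :=
      (Continuous.tendsto (by fun_prop) 0).eventually (hU.mem_nhds (by simpa using hs))
    have hFH := hasDerivAt_inner_along_line v (hF.differentiableAt (hU.mem_nhds hs))
      (hH.differentiableAt (hU.mem_nhds hs))
    have hGK := hasDerivAt_inner_along_line v (hG.differentiableAt (hU.mem_nhds hs))
      (hK.differentiableAt (hU.mem_nhds hs))
    exact hFH.unique (hGK.congr_of_eventuallyEq (hnear.mono fun x hx => h _ hx))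
  -- the real direction `v = 1` and the imaginary direction `v = I` separate the two terms
  have hre := hdiff 1
  have him := hdiff I
  simp only [map_one, conj_I, one_mul] at hre him
  linear_combination (hre + I * him) / 2 + (⟪deriv H s, F s⟫_ℂ - ⟪H s, deriv F s⟫_ℂ +
    ⟪K s, deriv G s⟫_ℂ - ⟪deriv K s, G s⟫_ℂ) / 2 * I_sq

variable [CompleteSpace E] [CompleteSpace E']

theorem inner_iteratedDeriv_eq_of_norm_eq (hU : IsOpen U) {F : ℂ → E} {G : ℂ → E'}
    (hF : AnalyticOnNhd ℂ F U) (hG : AnalyticOnNhd ℂ G U) (h : ∀ z ∈ U, ‖F z‖ = ‖G z‖)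
    (l : ℕ) {s : ℂ} (hs : s ∈ U) :
    ⟪iteratedDeriv l F s, F s⟫_ℂ = ⟪iteratedDeriv l G s, G s⟫_ℂ := by
  induction l generalizing s with
  | zero => simp only [iteratedDeriv_zero, inner_self_eq_norm_sq_to_K, h s hs]
  | succ l ih =>
    have hFl := hF.iterated_deriv l
    have hGl := hG.iterated_deriv l
    rw [← iteratedDeriv_eq_iterate] at hFl hGl
    rw [iteratedDeriv_succ, iteratedDeriv_succ]
    exact inner_deriv_eq_of_inner_eq hU hF.differentiableOn hFl.differentiableOn
      hG.differentiableOn hGl.differentiableOn (fun z hz => ih hz) hs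

theorem inner_eq_inner_of_norm_eq (hU : IsOpen U) (hU' : IsPreconnected U) {F : ℂ → E}
    {G : ℂ → E'} (hF : AnalyticOnNhd ℂ F U) (hG : AnalyticOnNhd ℂ G U)
    (h : ∀ z ∈ U, ‖F z‖ = ‖G z‖) {s w : ℂ} (hs : s ∈ U) (hw : w ∈ U) :
    ⟪F w, F s⟫_ℂ = ⟪G w, G s⟫_ℂ := by
  have hFs := (innerSL ℂ (F s)).comp_analyticOnNhd hF
  have hGs := (innerSL ℂ (G s)).comp_analyticOnNhd hG
  have hderiv (l : ℕ) :
      iteratedDeriv l (innerSL ℂ (F s) ∘ F) s = iteratedDeriv l (innerSL ℂ (G s) ∘ G) s := by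
    rw [ContinuousLinearMap.iteratedDeriv_comp_left _ (hF s hs).contDiffAt,
      ContinuousLinearMap.iteratedDeriv_comp_left _ (hG s hs).contDiffAt, innerSL_apply_apply,
      innerSL_apply_apply, ← inner_conj_symm, inner_iteratedDeriv_eq_of_norm_eq hU hF hG h l hs,
      inner_conj_symm]
  have hsw := hFs.eqOn_of_preconnected_of_eventuallyEq hGs hU' hs
    ((hFs s hs).eventuallyEq_of_iteratedDeriv_eq (hGs s hs) hderiv) hw
  simp only [Function.comp_apply, innerSL_apply_apply] at hsw
  rw [← inner_conj_symm, hsw, inner_conj_symm]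

end

theorem DifferentiableOn.analyticOnNhd_euclideanSpace {ι : Type*} [Fintype ι] {U : Set ℂ}
    (hU : IsOpen U) {f : ι → ℂ → ℂ} (hf : ∀ i, DifferentiableOn ℂ (f i) U) :
    AnalyticOnNhd ℂ (fun z => (EuclideanSpace.equiv ι ℂ).symm (f · z)) U :=
  ((EuclideanSpace.equiv ι ℂ).symm.comp_differentiableOn_iff.2
    (differentiableOn_pi.2 hf)).analyticOnNhd hU

theorem stmt_6 (U : Set ℂ) (hU : IsOpen U) (hUc : IsConnected U)
    (n m : ℕ) (f : Fin n → ℂ → ℂ) (g : Fin m → ℂ → ℂ)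
    (hf : ∀ i, DifferentiableOn ℂ (f i) U) (hg : ∀ j, DifferentiableOn ℂ (g j) U)
    (hsum : ∀ s ∈ U, ∑ i, ‖f i s‖ ^ 2 = ∑ j, ‖g j s‖ ^ 2) :
    ∀ s ∈ U, ∀ t : ℂ, starRingEnd ℂ t ∈ U →
      ∑ i, f i s * starRingEnd ℂ (f i (starRingEnd ℂ t)) =
      ∑ j, g j s * starRingEnd ℂ (g j (starRingEnd ℂ t)) := by
  intro s hs t ht
  have key := inner_eq_inner_of_norm_eq hU hUc.isPreconnected
    (DifferentiableOn.analyticOnNhd_euclideanSpace hU hf)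
    (DifferentiableOn.analyticOnNhd_euclideanSpace hU hg)
    (fun z hz => by simp [EuclideanSpace.norm_eq, hsum z hz]) hs ht
  simpa [PiLp.inner_apply, RCLike.inner_apply] using key
end

section
/- Polarized disc version: suppose F(s,t) and g(s), h(t) are holomorphic with |g(s)h(t)| < 1 on U × V ⊆ ℂ², F(s,t) = −μ log(1 − g(s)h(t)) on U × V, and F(s,t) = Σᵢ fᵢ(s) kᵢ(t) is a finite sum of products of holomorphic functions. If μ ≠ 0 then g or h is constant. -/
/-!
If `h` is not constant, its image is infinite, so there are `n + 1` points `tⱼ ∈ V` whose values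
`wⱼ = h tⱼ` are distinct and nonzero. The `n + 1` vectors `(kᵢ tⱼ)ᵢ ∈ ℂⁿ` satisfy a nontrivial
relation `∑ⱼ cⱼ kᵢ tⱼ = 0`, and the product form of `F` turns it into
`∑ⱼ cⱼ log (1 - g s * wⱼ) = 0` for `s ∈ U`. If `g` is not constant either, `g '' U` is open, so
differentiating gives `∑ⱼ cⱼ wⱼ / (1 - z wⱼ) = 0` on an open set; since the poles `wⱼ⁻¹` are
distinct, all `cⱼ` vanish.
-/

open Complex
open Finset

section PartialFractions

variable {m : ℕ} {w c : Fin m → ℂ}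

lemma eq_zero_of_sum_mul_div_one_sub_mul_eq_zero (hw : Function.Injective w)
    (hw0 : ∀ j, w j ≠ 0) {Ω : Set ℂ} (hΩ : IsOpen Ω) (hΩne : Ω.Nonempty)
    (hden : ∀ z ∈ Ω, ∀ j, 1 - z * w j ≠ 0)
    (hsum : ∀ z ∈ Ω, ∑ j, c j * w j / (1 - z * w j) = 0) : c = 0 := by
  -- clearing denominators gives an entire function `P`, and at the pole `(w j)⁻¹` only the
  -- `j`-th term of `P` survives
  set P : ℂ → ℂ := fun z ↦ ∑ j, c j * w j * ∏ l ∈ univ.erase j, (1 - z * w l)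
  have hP_eq : ∀ z ∈ Ω, P z = (∑ j, c j * w j / (1 - z * w j)) * ∏ l, (1 - z * w l) := by
    intro z hz
    rw [sum_mul]
    refine sum_congr rfl fun j _ ↦ ?_
    rw [← mul_prod_erase univ (fun l ↦ 1 - z * w l) (mem_univ j), ← mul_assoc,
      div_mul_cancel₀ _ (hden z hz j)]
  have hP_entire : Differentiable ℂ P := by
    unfold P; fun_prop
  obtain ⟨z₀, hz₀⟩ := hΩne
  have hP_zero : ∀ z, P z = 0 := fun z ↦
    (hP_entire.differentiableOn.analyticOnNhd isOpen_univ)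
      |>.eqOn_zero_of_preconnected_of_eventuallyEq_zero isPreconnected_univ (Set.mem_univ z₀)
      (Filter.eventually_of_mem (hΩ.mem_nhds hz₀) fun z hz ↦ by simp [hP_eq z hz, hsum z hz])
      (Set.mem_univ z)
  funext j
  have hPj : P (w j)⁻¹ = c j * w j * ∏ l ∈ univ.erase j, (1 - (w j)⁻¹ * w l) := by
    refine sum_eq_single j (fun i _ hij ↦ ?_) (by simp)
    rw [prod_eq_zero (mem_erase.2 ⟨Ne.symm hij, mem_univ j⟩) (by simp [hw0 j]), mul_zero]
  have hprod : ∏ l ∈ univ.erase j, (1 - (w j)⁻¹ * w l) ≠ 0 := by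
    refine prod_ne_zero_iff.2 fun l hl ↦ sub_ne_zero.2 fun h1 ↦ (ne_of_mem_erase hl) (hw ?_)
    field_simp [hw0 j] at h1
    exact h1.symm
  simpa [hw0 j, hprod, hP_zero] using hPj.symm

lemma eq_zero_of_sum_mul_log_one_sub_mul_eq_zero (hw : Function.Injective w)
    (hw0 : ∀ j, w j ≠ 0) {Ω : Set ℂ} (hΩ : IsOpen Ω) (hΩne : Ω.Nonempty)
    (hslit : ∀ z ∈ Ω, ∀ j, 1 - z * w j ∈ slitPlane)
    (hsum : ∀ z ∈ Ω, ∑ j, c j * log (1 - z * w j) = 0) : c = 0 := by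
  refine eq_zero_of_sum_mul_div_one_sub_mul_eq_zero hw hw0 hΩ hΩne
    (fun z hz j ↦ slitPlane_ne_zero (hslit z hz j)) fun z hz ↦ ?_
  have hderiv : HasDerivAt (fun z ↦ ∑ j, c j * log (1 - z * w j))
      (∑ j, c j * (-w j / (1 - z * w j))) z :=
    HasDerivAt.fun_sum fun j _ ↦ by
      simpa using ((((hasDerivAt_id z).mul_const (w j)).const_sub 1).clog
        (hslit z hz j)).const_mul (c j)
  have hderiv_zero : deriv (fun z ↦ ∑ j, c j * log (1 - z * w j)) z = 0 := by
    rw [Filter.EventuallyEq.deriv_eq (f := fun _ ↦ (0 : ℂ))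
      (Filter.eventually_of_mem (hΩ.mem_nhds hz) hsum), deriv_const]
  rw [hderiv.deriv] at hderiv_zero
  simpa [mul_div_assoc, neg_div] using hderiv_zero

end PartialFractions

lemma exists_fin_injective_comp_ne {X Y : Type*} [TopologicalSpace X] [TopologicalSpace Y]
    [T1Space Y] {V : Set X} {h : X → Y} (hV : IsPreconnected V) (hh : ContinuousOn h V)
    (hnc : ∀ y, ∃ t ∈ V, h t ≠ y) (y₀ : Y) (m : ℕ) :
    ∃ t : Fin m → X, (∀ j, t j ∈ V) ∧ Function.Injective (h ∘ t) ∧ ∀ j, h (t j) ≠ y₀ := by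
  obtain ⟨t₀, ht₀, -⟩ := hnc y₀
  obtain ⟨t₁, ht₁, hne⟩ := hnc (h t₀)
  have hinf : (h '' V \ {y₀}).Infinite :=
    ((hV.image h hh).infinite_of_nontrivial
      ⟨_, Set.mem_image_of_mem h ht₁, _, Set.mem_image_of_mem h ht₀, hne⟩).sdiff
      (Set.finite_singleton y₀)
  let e : Fin m ↪ ↥(h '' V \ {y₀}) := Fin.valEmbedding.trans (hinf.natEmbedding _)
  choose t ht using fun j ↦ (e j).2.1
  exact ⟨t, fun j ↦ (ht j).1, fun a b hab ↦ e.injective (Subtype.ext <| by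
    simpa only [Function.comp_apply, (ht _).2] using hab), fun j ↦ (ht j).2 ▸ (e j).2.2⟩

lemma exists_ne_zero_sum_mul_eq_zero {K ι κ : Type*} [Field K] [Fintype ι] [Fintype κ]
    (hcard : Fintype.card κ < Fintype.card ι) (v : ι → κ → K) :
    ∃ c : ι → K, c ≠ 0 ∧ ∀ i, ∑ j, c j * v j i = 0 := by
  have hdep : ¬ LinearIndependent K v := fun hli ↦ by
    simpa using hcard.trans_le hli.fintype_card_le_finrank
  obtain ⟨c, hc, j, hj⟩ := Fintype.not_linearIndependent_iff.1 hdep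
  exact ⟨c, fun h0 ↦ hj (congrFun h0 j), fun i ↦ by simpa using congrFun hc i⟩

theorem stmt_15_general (U V : Set ℂ) (hU : IsOpen U) (hUc : IsConnected U)
    (hVc : IsConnected V)
    (g h : ℂ → ℂ) (hg : DifferentiableOn ℂ g U) (hh : DifferentiableOn ℂ h V)
    (n : ℕ) (f k : Fin n → ℂ → ℂ)
    (hlt : ∀ s ∈ U, ∀ t ∈ V, ‖g s * h t‖ < 1)
    (μ : ℝ) (hμ : μ ≠ 0)
    (hiso : ∀ s ∈ U, ∀ t ∈ V,
      ∑ i, f i s * k i t = -(μ : ℂ) * Complex.log (1 - g s * h t)) :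
    (∃ c : ℂ, ∀ s ∈ U, g s = c) ∨ (∃ c : ℂ, ∀ t ∈ V, h t = c) := by
  by_contra! ⟨hgc, hhc⟩
  obtain ⟨t, htV, hw_inj, hw0⟩ :=
    exists_fin_injective_comp_ne hVc.isPreconnected hh.continuousOn hhc 0 (n + 1)
  obtain ⟨c, hc, hck⟩ := exists_ne_zero_sum_mul_eq_zero (by simp) fun j i ↦ k i (t j)
  have hg_open : IsOpen (g '' U) :=
    ((hg.analyticOnNhd hU).is_constant_or_isOpen hUc.isPreconnected).resolve_left
      (fun ⟨z, hz⟩ ↦ let ⟨s, hs, hne⟩ := hgc z; hne (hz s hs)) U subset_rfl hU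
  refine hc (eq_zero_of_sum_mul_log_one_sub_mul_eq_zero (w := h ∘ t) hw_inj hw0 hg_open
    (hUc.nonempty.image g) ?_ ?_)
  · rintro _ ⟨s, hs, rfl⟩ j
    simpa [sub_eq_add_neg] using
      mem_slitPlane_of_norm_lt_one (z := -(g s * h (t j))) (by simpa using hlt s hs _ (htV j))
  · rintro _ ⟨s, hs, rfl⟩
    have hsum_log : -(μ : ℂ) * ∑ j, c j * log (1 - g s * h (t j)) = 0 := calc
      _ = ∑ j, c j * ∑ i, f i s * k i (t j) := by
        rw [mul_sum]
        exact sum_congr rfl fun j _ ↦ by rw [hiso s hs _ (htV j)]; ring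
      _ = ∑ i, f i s * ∑ j, c j * k i (t j) := by
        simp_rw [mul_sum]
        rw [sum_comm]
        exact sum_congr rfl fun i _ ↦ sum_congr rfl fun j _ ↦ by ring
      _ = 0 := by simp [hck]
    simpa [hμ] using hsum_log

theorem stmt_15 (U V : Set ℂ) (hU : IsOpen U) (hUc : IsConnected U)
    (hV : IsOpen V) (hVc : IsConnected V)
    (g h : ℂ → ℂ) (hg : DifferentiableOn ℂ g U) (hh : DifferentiableOn ℂ h V)
    (n : ℕ) (f k : Fin n → ℂ → ℂ)
    (hf : ∀ i, DifferentiableOn ℂ (f i) U) (hk : ∀ i, DifferentiableOn ℂ (k i) V)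
    (hlt : ∀ s ∈ U, ∀ t ∈ V, ‖g s * h t‖ < 1)
    (μ : ℝ) (hμ : μ ≠ 0)
    (hiso : ∀ s ∈ U, ∀ t ∈ V,
      ∑ i, f i s * k i t = -(μ : ℂ) * Complex.log (1 - g s * h t)) :
    (∃ c : ℂ, ∀ s ∈ U, g s = c) ∨ (∃ c : ℂ, ∀ t ∈ V, h t = c) :=
  stmt_15_general U V hU hUc hVc g h hg hh n f k hlt μ hμ hiso
end
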